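/- Let R be an associative ring and I_n(R) (n ≥ 1) the two-sided ideal generated by products L_{i_1}(R)···L_{i_m}(R) with all i_j ≥ 2 and i_1 + ... + i_m ≥ n, where L_i(R) is the i-th lower central series term of R as a Lie ring under commutator. Then [R, I_n(R)] ⊆ I_{n+1}(R); consequently, in the associated graded ring gr_I(R) = ⊕_n I_n(R)/I_{n+1}(R) (with I_0(R) = R), the degree-zero piece R/I_1(R) maps to the center. -/

import Mathlib

variable (R : Type*) [Ring R]

/-- `lcsR R n` is the `(n+1)`-st term `L_{n+1}(R)` of the lower central series of `R` viewed
as a Lie ring under the commutator: `lcsR R 0 = L₁(R) = R`,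
`lcsR R (n+1) = L_{n+2}(R) = [R, L_{n+1}(R)]` (as an additive subgroup, i.e. `ℤ`-submodule). -/
def lcsR : ℕ → Submodule ℤ R
  | 0 => ⊤
  | n + 1 => Submodule.span ℤ {x : R | ∃ a : R, ∃ b ∈ lcsR n, x = a * b - b * a}

/-- For a list `[n₁, …, nₘ]` of positive integers, `chainR R [n₁, …, nₘ]` is the additive
subgroup `R·L_{n₁}(R)·R·L_{n₂}(R)·⋯·L_{nₘ}(R)·R` of products of elements of the lower
central series terms interspersed with arbitrary ring elements. -/
def chainR : List ℕ → Submodule ℤ R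
  | [] => ⊤
  | n :: t => ⊤ * lcsR R (n - 1) * chainR t

/-- The I-filtration: `idealI R n` is the two-sided ideal generated by all products
(interspersed with ring elements) `L_{i₁}(R)⋯L_{iₘ}(R)` with each `iⱼ ≥ 2` and
`i₁ + ⋯ + iₘ ≥ n`. Note `idealI R 0 = R` (the empty product), playing the role of
`I₀(R) = R`. -/
def idealI (n : ℕ) : Submodule ℤ R :=
  ⨆ (ns : List ℕ) (_ : ∀ i ∈ ns, 2 ≤ i) (_ : n ≤ ns.sum), chainR R ns

/-! Commutation with `r` is a derivation, so it sends a product `R·L_{i₁}·R⋯L_{iₘ}·R` into a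
sum of such products in each of which exactly one factor is replaced by its commutator with
`r`. A factor `R` becomes `[r, R] ⊆ L₂`, contributing a new factor of weight `2`, and a
factor `L_i` becomes `L_{i+1}`; in both cases the total weight grows by at least one. -/

section

variable (S : Type*) {A : Type*} [CommSemiring S] [Ring A] [Algebra S A]

def commutatorMap (a : A) : A →ₗ[S] A :=
  LinearMap.mulLeft S a - LinearMap.mulRight S a

@[simp]
theorem commutatorMap_apply (a x : A) : commutatorMap S a x = a * x - x * a :=
  rfl

variable {S}

theorem Submodule.map_commutatorMap_mul_le (a : A) (M N : Submodule S A) :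
    (M * N).map (commutatorMap S a) ≤
      M.map (commutatorMap S a) * N + M * N.map (commutatorMap S a) := by
  refine Submodule.map_le_iff_le_comap.mpr (Submodule.mul_le.mpr fun m hm n hn => ?_)
  have leibniz : a * (m * n) - m * n * a = (a * m - m * a) * n + m * (a * n - n * a) := by
    noncomm_ring
  rw [Submodule.mem_comap, commutatorMap_apply, leibniz]
  exact Submodule.add_mem_sup
    (Submodule.mul_mem_mul (Submodule.mem_map_of_mem (f := commutatorMap S a) hm) hn)
    (Submodule.mul_mem_mul hm (Submodule.mem_map_of_mem (f := commutatorMap S a) hn))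

end

theorem Submodule.le_top_mul_top {S A : Type*} [CommSemiring S] [Semiring A] [Algebra S A]
    (M : Submodule S A) : M ≤ ⊤ * M * ⊤ :=
  calc M = 1 * M * 1 := by rw [one_mul, mul_one]
    _ ≤ ⊤ * M * ⊤ := by gcongr <;> exact le_top

section

variable {R}

theorem map_commutatorMap_lcsR_le (r : R) (k : ℕ) :
    (lcsR R k).map (commutatorMap ℤ r) ≤ lcsR R (k + 1) :=
  Submodule.map_le_iff_le_comap.mpr fun x hx => Submodule.subset_span ⟨r, x, hx, rfl⟩

theorem map_commutatorMap_top_le (r : R) :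
    (⊤ : Submodule ℤ R).map (commutatorMap ℤ r) ≤ ⊤ * lcsR R (2 - 1) * ⊤ :=
  (map_commutatorMap_lcsR_le r 0).trans (Submodule.le_top_mul_top _)

theorem chainR_le_idealI {ns : List ℕ} {n : ℕ} (hns : ∀ i ∈ ns, 2 ≤ i) (hn : n ≤ ns.sum) :
    chainR R ns ≤ idealI R n :=
  le_iSup_of_le ns (le_iSup_of_le hns (le_iSup_of_le hn le_rfl))

theorem idealI_antitone : Antitone (idealI R) := fun _ _ hmn =>
  iSup_le fun _ => iSup_le fun hns => iSup_le fun hn => chainR_le_idealI hns (hmn.trans hn)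

theorem top_mul_lcsR_mul_idealI_le {k : ℕ} (hk : 2 ≤ k) (n : ℕ) :
    ⊤ * lcsR R (k - 1) * idealI R n ≤ idealI R (k + n) := by
  simp only [idealI, Submodule.mul_iSup]
  exact iSup_le fun ns => iSup_le fun hns => iSup_le fun hn =>
    chainR_le_idealI (ns := k :: ns) (by simpa [hk] using hns) (by simpa using hn)

theorem map_commutatorMap_chainR_le (r : R) {ns : List ℕ} (hns : ∀ i ∈ ns, 2 ≤ i) :
    (chainR R ns).map (commutatorMap ℤ r) ≤ idealI R (ns.sum + 1) := by
  induction ns with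
  | nil =>
    exact (map_commutatorMap_top_le r).trans (chainR_le_idealI (ns := [2]) (by simp) (by simp))
  | cons k t ih =>
    rw [List.sum_cons]
    obtain ⟨hk, ht⟩ := List.forall_mem_cons.mp hns
    have hC : chainR R t ≤ idealI R t.sum := chainR_le_idealI ht le_rfl
    have hkC : ⊤ * lcsR R (k - 1) * chainR R t ≤ idealI R (k + t.sum) :=
      (mul_le_mul_right hC _).trans (top_mul_lcsR_mul_idealI_le hk _)
    have h_top : (⊤ : Submodule ℤ R).map (commutatorMap ℤ r) * lcsR R (k - 1) * chainR R t ≤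
        idealI R (2 + (k + t.sum)) :=
      calc _ ≤ ⊤ * lcsR R (2 - 1) * ⊤ * lcsR R (k - 1) * chainR R t := by
            gcongr; exact map_commutatorMap_top_le r
        _ = ⊤ * lcsR R (2 - 1) * (⊤ * lcsR R (k - 1) * chainR R t) := by simp only [mul_assoc]
        _ ≤ _ := (mul_le_mul_right hkC _).trans (top_mul_lcsR_mul_idealI_le le_rfl _)
    have h_lcs : ⊤ * (lcsR R (k - 1)).map (commutatorMap ℤ r) * chainR R t ≤
        idealI R ((k + 1) + t.sum) :=
      calc _ ≤ ⊤ * lcsR R (k + 1 - 1) * idealI R t.sum := by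
            gcongr
            exact (map_commutatorMap_lcsR_le r (k - 1)).trans_eq (by congr 1; omega)
        _ ≤ _ := top_mul_lcsR_mul_idealI_le (by omega) _
    have h_chain : ⊤ * lcsR R (k - 1) * (chainR R t).map (commutatorMap ℤ r) ≤
        idealI R (k + (t.sum + 1)) :=
      (mul_le_mul_right (ih ht) _).trans (top_mul_lcsR_mul_idealI_le hk _)
    refine (Submodule.map_commutatorMap_mul_le r _ _).trans (sup_le ?_ ?_)
    · refine (mul_le_mul_left (Submodule.map_commutatorMap_mul_le r _ _) _).trans ?_
      rw [add_mul]
      exact sup_le (h_top.trans (idealI_antitone (by omega)))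
        (h_lcs.trans (idealI_antitone (by omega)))
    · exact h_chain.trans (idealI_antitone (by omega))

theorem map_commutatorMap_idealI_le (r : R) (n : ℕ) :
    (idealI R n).map (commutatorMap ℤ r) ≤ idealI R (n + 1) :=
  Submodule.map_le_iff_le_comap.mpr <| iSup_le fun _ => iSup_le fun hns => iSup_le fun hn =>
    Submodule.map_le_iff_le_comap.mp
      ((map_commutatorMap_chainR_le r hns).trans (idealI_antitone (Nat.succ_le_succ hn)))

end

/-- **Centrality modulo the I-filtration:** `[R, Iₙ(R)] ⊆ I_{n+1}(R)` for all `n`.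
(The case `n = 0`, where `I₀(R) = R`, says that the degree-zero piece `R/I₁(R)` of the
associated graded ring `gr_I(R)` maps to its center.) -/
theorem stmt_8 (n : ℕ) (r x : R) (hx : x ∈ idealI R n) :
    r * x - x * r ∈ idealI R (n + 1) :=
  map_commutatorMap_idealI_le r n (Submodule.mem_map_of_mem hx)
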